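/- arXiv:2204.05661 — 6 statements merged into one kernel-verified Lean document; each statement's English description precedes it below -/
import Mathlib

section
/- Let (G,s,t) be a generalized cat¹-group. Then (ker s, im s, t̄) is a generalized crossed module, where t̄ is the restriction of t to ker s and im s acts on ker s by x·g = ˣg (restriction of the self-action of G). -/
/-- A group with action: a group `G` together with a left action of `G` on itself
(by automorphisms). -/
structure SelfAct (G : Type*) [Group G] where
  act : G → G → G
  one_act : ∀ x, act 1 x = x
  mul_act : ∀ g h x, act (g * h) x = act g (act h x)
  act_mul : ∀ g x y, act g (x * y) = act g x * act g y

/-- `(A,B,α)` with action `ρ` of `B` on `A` is a generalized crossed module. -/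
structure IsGCM {A B : Type*} [Group A] [Group B] (sA : SelfAct A) (sB : SelfAct B)
    (α : A →* B) (ρ : B → A → A) : Prop where
  one_smul : ∀ a, ρ 1 a = a
  mul_smul : ∀ b b' a, ρ (b * b') a = ρ b (ρ b' a)
  smul_mul : ∀ b a a', ρ b (a * a') = ρ b a * ρ b a'
  equiv : ∀ b a, α (ρ b a) = sB.act b (α a)
  peiffer : ∀ a a₁, ρ (α a) a₁ = sA.act a a₁

/-- Morphism of generalized crossed modules. -/
structure IsGCMHom {A B A' B' : Type*} [Group A] [Group B] [Group A'] [Group B']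
    (ρ : B → A → A) (ρ' : B' → A' → A')
    (α : A →* B) (α' : A' →* B') (f : A →* A') (g : B →* B') : Prop where
  comm : ∀ a, g (α a) = α' (f a)
  equivar : ∀ b a, f (ρ b a) = ρ' (g b) (f a)

/-- The restriction of a self-action to a subgroup closed under it. -/
def subAct {G : Type*} [Group G] (sG : SelfAct G) (H : Subgroup G)
    (hcl : ∀ g x : G, g ∈ H → x ∈ H → sG.act g x ∈ H) : SelfAct H where
  act g x := ⟨sG.act g x, hcl g x g.2 x.2⟩
  one_act x := Subtype.ext (sG.one_act x)
  mul_act g h x := Subtype.ext (sG.mul_act g h x)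
  act_mul g x y := Subtype.ext (sG.act_mul g x y)


theorem SelfAct.act_one' {G : Type*} [Group G] (sG : SelfAct G) (g : G) :
    sG.act g 1 = 1 := by
  have h := sG.act_mul g 1 1
  rw [one_mul] at h
  exact left_eq_mul.mp h

/-- for a generalized cat¹-group `(G,s,t)`, the triple
`(ker s, im s, t̄)` is a generalized crossed module, where `im s` acts on `ker s`
by restriction of the self-action of `G`. -/
theorem gencat1_to_gcm {G : Type*} [Group G] (sG : SelfAct G) (s t : G →* G)
    (hs : ∀ g x, s (sG.act g x) = sG.act (s g) (s x))
    (ht : ∀ g x, t (sG.act g x) = sG.act (t g) (t x))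
    (hst : ∀ x, s (t x) = t x) (hts : ∀ x, t (s x) = s x)
    (htriv : ∀ x y : G, s x = 1 → t y = 1 → sG.act y x = x) :
    IsGCM
      (subAct sG s.ker (fun g x hg hx => by
        have hg' : s g = 1 := hg
        have hx' : s x = 1 := hx
        show s (sG.act g x) = 1
        rw [hs, hg', hx', sG.one_act]))
      (subAct sG s.range (fun g x hg hx => by
        rcases MonoidHom.mem_range.mp hg with ⟨a, rfl⟩
        rcases MonoidHom.mem_range.mp hx with ⟨b, rfl⟩
        exact MonoidHom.mem_range.mpr ⟨sG.act a b, hs a b⟩))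
      ((t.comp s.ker.subtype).codRestrict s.range
        (fun x => MonoidHom.mem_range.mpr ⟨t x, hst x⟩))
      (fun x g => ⟨sG.act x.1 g.1, by
        have hg' : s g.1 = 1 := g.2
        show s (sG.act x.1 g.1) = 1
        rw [hs, hg', SelfAct.act_one']⟩) := by
  constructor
  · intro a
    exact Subtype.ext (sG.one_act a.1)
  · intro b b' a
    exact Subtype.ext (sG.mul_act b.1 b'.1 a.1)
  · intro b a a'
    exact Subtype.ext (sG.act_mul b.1 a.1 a'.1)
  · intro b a
    apply Subtype.ext
    rcases MonoidHom.mem_range.mp b.2 with ⟨c, hc⟩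
    have hb : t b.1 = b.1 := by rw [← hc]; exact hts c
    show t (sG.act b.1 a.1) = sG.act b.1 (t a.1)
    rw [ht, hb]
  · intro a a₁
    apply Subtype.ext
    show sG.act (t a.1) a₁.1 = sG.act a.1 a₁.1
    have key : sG.act (a.1⁻¹ * t a.1) a₁.1 = a₁.1 := by
      apply htriv
      · exact a₁.2
      · have htt : t (t a.1) = t a.1 := by rw [← hst a.1, hts, hst]
        rw [map_mul, map_inv, htt, inv_mul_cancel]
    calc sG.act (t a.1) a₁.1 = sG.act (a.1 * (a.1⁻¹ * t a.1)) a₁.1 := by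
            rw [mul_inv_cancel_left]
      _ = sG.act a.1 (sG.act (a.1⁻¹ * t a.1) a₁.1) := sG.mul_act _ _ _
      _ = sG.act a.1 a₁.1 := by rw [key]
end

section
/- Let (C,D,γ) be a simply connected generalized crossed module (γ surjective), ⟨f,g⟩ : (C,D,γ) → (A,B,α) a morphism of generalized crossed modules, and ⟨f̃,g̃⟩ : (Ã,B̃,α̃) → (A,B,α) a covering morphism. Then there exists a morphism ⟨f',g'⟩ : (C,D,γ) → (Ã,B̃,α̃) with ⟨f̃,g̃⟩∘⟨f',g'⟩ = ⟨f,g⟩ if and only if f(ker γ) ⊆ f̃(ker α̃). -/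
/-- lifting criterion for coverings of generalized crossed modules. -/
theorem covering_lifting_criterion {C D A B At Bt : Type*}
    [Group C] [Group D] [Group A] [Group B] [Group At] [Group Bt]
    (sC : SelfAct C) (sD : SelfAct D) (sA : SelfAct A) (sB : SelfAct B)
    (sAt : SelfAct At) (sBt : SelfAct Bt)
    (γ : C →* D) (ρC : D → C → C) (α : A →* B) (ρ : B → A → A)
    (αt : At →* Bt) (ρt : Bt → At → At)
    (hC : IsGCM sC sD γ ρC) (hA : IsGCM sA sB α ρ) (hAt : IsGCM sAt sBt αt ρt)
    (hsc : Function.Surjective γ)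
    (f : C →* A) (g : D →* B) (hfg : IsGCMHom ρC ρ γ α f g)
    (ft : At →* A) (gt : Bt →* B) (hcov : IsGCMHom ρt ρ αt α ft gt)
    (hft : Function.Bijective ft) :
    (∃ (f' : C →* At) (g' : D →* Bt), IsGCMHom ρC ρt γ αt f' g' ∧
        (∀ c, ft (f' c) = f c) ∧ (∀ d, gt (g' d) = g d)) ↔
      (∀ c : C, γ c = 1 → ∃ a : At, αt a = 1 ∧ ft a = f c) := by
  constructor
  · rintro ⟨f', g', hgcm, hf, hg⟩ c hc
    exact ⟨f' c, by rw [← hgcm.comm c, hc, map_one], hf c⟩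
  · intro hker
    let e := MulEquiv.ofBijective ft hft
    let f' : C →* At := e.symm.toMonoidHom.comp f
    have hfe : ∀ c, ft (f' c) = f c := fun c => e.apply_symm_apply (f c)
    have hker' : γ.ker ≤ (αt.comp f').ker := by
      intro c hc
      simp only [MonoidHom.mem_ker] at hc ⊢
      obtain ⟨a, ha1, ha2⟩ := hker c hc
      have : f' c = a := hft.injective (by rw [hfe, ha2])
      rw [MonoidHom.comp_apply, this, ha1]
    let g' : D →* Bt := γ.liftOfRightInverse (Function.surjInv hsc)
      (Function.rightInverse_surjInv hsc) ⟨αt.comp f', hker'⟩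
    have hg' : ∀ c, g' (γ c) = αt (f' c) :=
      fun c => γ.liftOfRightInverse_comp_apply _ _ ⟨αt.comp f', hker'⟩ c
    have hgt : ∀ d, gt (g' d) = g d := by
      intro d
      obtain ⟨c, rfl⟩ := hsc d
      rw [hg', hcov.comm, hfe, hfg.comm]
    refine ⟨f', g', ⟨fun c => hg' c, ?_⟩, hfe, hgt⟩
    intro d c
    apply hft.injective
    rw [hfe, hcov.equivar, hfe, hgt, hfg.equivar]
end

section
/- Let X be a self-acting topological group with identity e. Then P(X,e), the set of homotopy classes of paths starting at e, is an ideal of the group with action π(X): it is a normal subgroup, ^{[α]}[β] ∈ P(X,e), and ^{[β]}[α] − [α] ∈ P(X,e) for all [α] ∈ π(X), [β] ∈ P(X,e). -/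
/-- Homotopy rel endpoints between paths `[0,1] → X`. -/
def Hrel {X : Type*} [TopologicalSpace X] (f g : C(unitInterval, X)) : Prop :=
  Nonempty (ContinuousMap.HomotopyRel f g {0, 1})

/-- The pointwise action of one path on another induced by a continuous
self-action `ψ` of `X`. -/
def pact {X : Type*} [TopologicalSpace X] (ψ : X → X → X)
    (hψc : Continuous fun p : X × X => ψ p.1 p.2) (f g : C(unitInterval, X)) :
    C(unitInterval, X) :=
  ⟨fun t => ψ (f t) (g t), hψc.comp (f.continuous.prodMk g.continuous)⟩


/-- for a self-acting topological group `X` with identity `1`, the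
classes of paths starting at `1` form an ideal `P(X,1)` of the group with action
`π(X)`: membership is well defined on homotopy classes, `P(X,1)` is a normal
subgroup, it is closed under the induced self-action, and
`^[β][α] * [α]⁻¹ ∈ P(X,1)` for every path `α` and every `β ∈ P(X,1)`. -/
theorem paths_at_identity_ideal {X : Type*} [TopologicalSpace X] [Group X]
    [IsTopologicalGroup X] (ψ : X → X → X)
    (hψc : Continuous fun p : X × X => ψ p.1 p.2)
    (hψ1 : ∀ x, ψ 1 x = x) (hψm : ∀ g h x, ψ (g * h) x = ψ g (ψ h x))
    (hψmul : ∀ g x y, ψ g (x * y) = ψ g x * ψ g y) :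
    (∀ f g : C(unitInterval, X), Hrel f g → (f 0 = 1 ↔ g 0 = 1)) ∧
    ((1 : C(unitInterval, X)) 0 = 1) ∧
    (∀ f g : C(unitInterval, X), f 0 = 1 → g 0 = 1 → (f * g) 0 = 1) ∧
    (∀ f : C(unitInterval, X), f 0 = 1 → f⁻¹ 0 = 1) ∧
    (∀ f g : C(unitInterval, X), g 0 = 1 → (f * g * f⁻¹) 0 = 1) ∧
    (∀ f g : C(unitInterval, X), g 0 = 1 → (pact ψ hψc f g) 0 = 1) ∧
    (∀ f g : C(unitInterval, X), g 0 = 1 → (pact ψ hψc g f * f⁻¹) 0 = 1) := by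
  have key : ∀ (g0 : X), ψ g0 (1:X) = 1 := fun g0 => by
    have h1 : ψ g0 1 * ψ g0 1 = ψ g0 1 * 1 := by rw [← hψmul]; simp
    exact mul_left_cancel h1
  refine ⟨fun f g h => ?_, rfl, fun f g hf hg => ?_, fun f hf => ?_,
    fun f g hg => ?_, fun f g hg => ?_, fun f g hg => ?_⟩
  · obtain ⟨H⟩ := h
    have : f 0 = g 0 :=
      (H.eq_fst 0 (Or.inl rfl)).symm.trans (H.eq_snd 0 (Or.inl rfl))
    rw [this]
  · simp [ContinuousMap.mul_apply, hf, hg]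
  · simp [ContinuousMap.inv_apply, hf]
  · simp [ContinuousMap.mul_apply, ContinuousMap.inv_apply, hg]
  · simp [pact, hg, key]
  · simp [pact, ContinuousMap.mul_apply, ContinuousMap.inv_apply, hg, hψ1]
end

section
/- Let (A,B,α) be a generalized crossed module, X a group with action, and φ : A → X, ω : X → B group homomorphisms with ω∘φ = α, where X acts on A via ω (x·a := ω(x)·a). Then (A,X,φ) is a generalized crossed module if and only if φ(x·a) = ˣφ(a) for all x ∈ X, a ∈ A. -/
/-- `(A,X,φ)`, with `X` acting on `A` via `ω`, is a generalized
crossed module (hence a lifting of `(A,B,α)`) iff `φ (x · a) = ˣ(φ a)`. -/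
theorem lifting_criterion {A B X : Type*} [Group A] [Group B] [Group X]
    (sA : SelfAct A) (sB : SelfAct B) (sX : SelfAct X)
    (α : A →* B) (ρ : B → A → A) (h : IsGCM sA sB α ρ)
    (φ : A →* X) (ω : X →* B) (hωφ : ∀ a, ω (φ a) = α a) :
    IsGCM sA sX φ (fun x a => ρ (ω x) a) ↔
      (∀ (x : X) (a : A), φ (ρ (ω x) a) = sX.act x (φ a)) := by
  constructor
  · intro hg x a
    exact hg.equiv x a
  · intro he
    exact {
      one_smul := fun a => by simp [h.one_smul]
      mul_smul := fun x x' a => by simp [h.mul_smul]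
      smul_mul := fun x a a' => h.smul_mul _ a a'
      equiv := he
      peiffer := fun a a₁ => by rw [hωφ]; exact h.peiffer a a₁ }
end

section
/- Let ⟨f,g⟩ : (Ã,B̃,α̃) → (A,B,α) be a morphism of generalized crossed modules with (Ã,B̃,α̃) simply connected, and let (A,X,φ) be a lifting of (A,B,α) over ω : X → B. Then there exists a morphism ⟨f,g̃⟩ : (Ã,B̃,α̃) → (A,X,φ) of generalized crossed modules with ω∘g̃ = g if and only if f(ker α̃) ⊆ ker φ. -/
/-- criterion for lifting a morphism of generalized crossed modules
through a lifting `(A,X,φ)` of `(A,B,α)`. -/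
theorem morphism_lifting_criterion {At Bt A B X : Type*}
    [Group At] [Group Bt] [Group A] [Group B] [Group X]
    (sAt : SelfAct At) (sBt : SelfAct Bt) (sA : SelfAct A) (sB : SelfAct B)
    (sX : SelfAct X)
    (αt : At →* Bt) (ρt : Bt → At → At) (α : A →* B) (ρ : B → A → A)
    (hAt : IsGCM sAt sBt αt ρt) (hA : IsGCM sA sB α ρ)
    (hsc : Function.Surjective αt)
    (f : At →* A) (g : Bt →* B) (hfg : IsGCMHom ρt ρ αt α f g)
    (φ : A →* X) (ω : X →* B)
    (hlift : IsGCM sA sX φ (fun x a => ρ (ω x) a))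
    (hωφ : ∀ a, ω (φ a) = α a) :
    (∃ gt : Bt →* X, IsGCMHom ρt (fun x a => ρ (ω x) a) αt φ f gt ∧
        ∀ b : Bt, ω (gt b) = g b) ↔
      (∀ a : At, αt a = 1 → φ (f a) = 1) := by
  constructor
  · rintro ⟨gt, hgt, -⟩ a ha
    have := hgt.comm a
    rw [ha, map_one] at this
    exact this.symm
  · intro hker
    -- key: well-definedness
    have key : ∀ a a' : At, αt a = αt a' → φ (f a) = φ (f a') := by
      intro a a' h
      have h1 : αt (a * a'⁻¹) = 1 := by
        rw [map_mul, map_inv, h, mul_inv_cancel]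
      have := hker _ h1
      rw [map_mul, map_mul, map_inv, map_inv] at this
      exact mul_inv_eq_one.mp this
    have sec : ∀ b, αt (Function.surjInv hsc b) = b := Function.surjInv_eq hsc
    refine ⟨{ toFun := fun b => φ (f (Function.surjInv hsc b))
              map_one' := ?_
              map_mul' := ?_ }, ⟨?_, ?_⟩, ?_⟩
    · have : φ (f (Function.surjInv hsc (1:Bt))) = φ (f (1:At)) :=
        key _ _ (by rw [sec, map_one])
      simpa using this
    · intro b b'
      have : φ (f (Function.surjInv hsc (b * b'))) =
          φ (f (Function.surjInv hsc b * Function.surjInv hsc b')) :=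
        key _ _ (by rw [sec, map_mul, sec, sec])
      simpa using this
    · intro a
      exact key _ _ (sec (αt a))
    · intro b a
      have h1 : ω (φ (f (Function.surjInv hsc b))) = g b := by
        rw [hωφ, ← hfg.comm, sec]
      simp only [MonoidHom.coe_mk, OneHom.coe_mk]
      rw [hfg.equivar, h1]
    · intro b
      simp only [MonoidHom.coe_mk, OneHom.coe_mk]
      rw [hωφ, ← hfg.comm, sec]
end

section
/- Let (A,B,α) be a generalized crossed module and N an ideal of the group with action A with N ⊆ ker α. Then (A, A/N, p) is a lifting of (A,B,α) over ω : A/N → B, a+N ↦ α(a), where p : A → A/N is the quotient map, A/N carries the induced self-action, and A/N acts on A via ω; moreover ker p = N. -/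
/-- for an ideal `N ⊆ ker α` of the group with action `A`, the
quotient `(A, A/N, p)` is a lifting of `(A,B,α)` over the induced map
`ω : A/N → B`, and `ker p = N`. -/
theorem quotient_lifting {A B : Type*} [Group A] [Group B]
    (sA : SelfAct A) (sB : SelfAct B) (α : A →* B) (ρ : B → A → A)
    (h : IsGCM sA sB α ρ)
    (N : Subgroup A) [N.Normal]
    (hN1 : ∀ a n : A, n ∈ N → sA.act a n ∈ N)
    (hN2 : ∀ n a : A, n ∈ N → sA.act n a * a⁻¹ ∈ N)
    (hNker : N ≤ α.ker) :
    ∃ sQ : SelfAct (A ⧸ N),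
      (∀ a a₁ : A, sQ.act ((a : A ⧸ N)) ((a₁ : A ⧸ N)) = ((sA.act a a₁ : A) : A ⧸ N)) ∧
      (∀ a : A, (QuotientGroup.lift N α hNker) ((QuotientGroup.mk' N) a) = α a) ∧
      IsGCM sA sQ (QuotientGroup.mk' N)
        (fun q a => ρ ((QuotientGroup.lift N α hNker) q) a) ∧
      (QuotientGroup.mk' N).ker = N := by
  classical
  -- well-definedness of the induced action on the quotient
  have key : ∀ (a b c d : A), (QuotientGroup.leftRel N) a c → (QuotientGroup.leftRel N) b d →
      ((sA.act a b : A) : A ⧸ N) = ((sA.act c d : A) : A ⧸ N) := by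
    intro a b c d hac' hbd'
    have hac : a⁻¹ * c ∈ N := QuotientGroup.leftRel_apply.mp hac'
    have hbd : b⁻¹ * d ∈ N := QuotientGroup.leftRel_apply.mp hbd'

    set n := a⁻¹ * c with hn
    set m := b⁻¹ * d with hm
    have hc : c = a * n := by rw [hn]; group
    have hd : d = b * m := by rw [hm]; group
    have hk : sA.act n d * d⁻¹ ∈ N := hN2 n d hac
    set k := sA.act n d * d⁻¹ with hkdef
    have hnd : sA.act n d = k * d := by rw [hkdef]; group
    have expand : sA.act c d = sA.act a k * sA.act a b * sA.act a m := by
      rw [hc, sA.mul_act, hnd, hd, sA.act_mul, sA.act_mul, sA.act_mul]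
      group
    refine QuotientGroup.eq.mpr ?_
    rw [expand]
    have h1 : sA.act a k ∈ N := hN1 a k hk
    have h2 : sA.act a m ∈ N := hN1 a m hbd
    have : (sA.act a b)⁻¹ * (sA.act a k * sA.act a b * sA.act a m)
        = ((sA.act a b)⁻¹ * sA.act a k * sA.act a b) * sA.act a m := by group
    rw [this]
    exact N.mul_mem (Subgroup.Normal.conj_mem' ‹N.Normal› _ h1 _) h2
  let qact : A ⧸ N → A ⧸ N → A ⧸ N := fun x y =>
    Quotient.liftOn₂' x y (fun a b => ((sA.act a b : A) : A ⧸ N))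
      (fun a b c d hac hbd => key a b c d hac hbd)
  have qact_mk : ∀ a b : A, qact (a : A ⧸ N) (b : A ⧸ N) = ((sA.act a b : A) : A ⧸ N) :=
    fun a b => rfl
  refine ⟨⟨qact, ?_, ?_, ?_⟩, fun a a₁ => rfl, fun a => rfl, ?_, QuotientGroup.ker_mk' N⟩
  · intro x
    induction x using QuotientGroup.induction_on with
    | H a =>
      have : ((1 : A) : A ⧸ N) = (1 : A ⧸ N) := rfl
      rw [← this, qact_mk, sA.one_act]
  · intro g hh x
    induction g using QuotientGroup.induction_on with
    | H g =>
      induction hh using QuotientGroup.induction_on with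
      | H hg =>
        induction x using QuotientGroup.induction_on with
        | H a =>
          have : ((g : A ⧸ N)) * (hg : A ⧸ N) = ((g * hg : A) : A ⧸ N) := rfl
          rw [this, qact_mk, qact_mk, qact_mk, sA.mul_act]
  · intro g x y
    induction g using QuotientGroup.induction_on with
    | H g =>
      induction x using QuotientGroup.induction_on with
      | H a =>
        induction y using QuotientGroup.induction_on with
        | H b =>
          have : ((a : A ⧸ N)) * (b : A ⧸ N) = ((a * b : A) : A ⧸ N) := rfl
          rw [this, qact_mk, qact_mk, qact_mk, sA.act_mul]
          rfl
  · constructor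
    · intro a; simpa using h.one_smul a
    · intro b b' a; simp only [map_mul]; exact h.mul_smul _ _ a
    · intro b a a'; exact h.smul_mul _ a a'
    · intro q a
      induction q using QuotientGroup.induction_on with
      | H b =>
        show ((ρ (α b) a : A) : A ⧸ N) = qact (b : A ⧸ N) (a : A ⧸ N)
        rw [qact_mk, h.peiffer]
    · intro a a₁
      show ρ (α a) a₁ = sA.act a a₁
      exact h.peiffer a a₁
end
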